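/- arXiv:0709.2831 — 3 statements merged into one kernel-verified Lean document; each statement's English description precedes it below -/
import Mathlib

section
/- Let n be a natural number and let P be a finite set of n points of the real projective plane ℙ² (the projectivization of ℝ³). If every 4-element subset of P contains three collinear points, then there is a projective line of ℙ² containing at least n − 1 of the points of P. -/
open scoped Classical

local notation "ℙ²" => Projectivization ℝ (Fin 3 → ℝ)

def ProjCollinear (a b c : Projectivization ℝ (Fin 3 → ℝ)) : Prop :=
  ¬ LinearIndependent ℝ ![a.rep, b.rep, c.rep]

open Submodule Module Projectivization

lemma myRange {u v : Fin 3 → ℝ} : Set.range ![u, v] = {u, v} := by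
  simp [Set.pair_comm]

lemma myPairLI {p q : ℙ²} (h : p ≠ q) : LinearIndependent ℝ ![p.rep, q.rep] := by
  have h2 := (Projectivization.independent_pair_iff_ne p q).2 h
  rw [Projectivization.independent_iff] at h2
  convert h2 using 1
  · funext i; fin_cases i <;> simp
  all_goals rfl

lemma mySpanRank {p q : ℙ²} (h : p ≠ q) :
    finrank ℝ (span ℝ {p.rep, q.rep} : Submodule ℝ (Fin 3 → ℝ)) = 2 := by
  have := finrank_span_eq_card (myPairLI h)
  rw [myRange] at this
  simpa using this

lemma colSwap {a b c : ℙ²} (h : ProjCollinear a b c) : ProjCollinear b a c := by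
  intro hli
  apply h
  have he : ![a.rep, b.rep, c.rep] = ![b.rep, a.rep, c.rep] ∘ (Equiv.swap (0:Fin 3) 1) := by
    funext i; fin_cases i <;> simp [Equiv.swap_apply_def, Fin.ext_iff]
  rw [he]
  exact (linearIndependent_equiv _).2 hli

lemma colRot {a b c : ℙ²} (h : ProjCollinear a b c) : ProjCollinear b c a := by
  intro hli
  apply h
  have e0 : (Equiv.symm (finRotate 3)) 0 = 2 := by decide
  have e1 : (Equiv.symm (finRotate 3)) 1 = 0 := by decide
  have e2 : (Equiv.symm (finRotate 3)) 2 = 1 := by decide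
  have he : ![a.rep, b.rep, c.rep] = ![b.rep, c.rep, a.rep] ∘ (finRotate 3).symm := by
    funext i; fin_cases i <;> simp [e0, e1, e2]
  rw [he]
  exact (linearIndependent_equiv _).2 hli

lemma colThird {a b c : ℙ²} (hab : a ≠ b) (h : ProjCollinear a b c) :
    c.rep ∈ span ℝ ({a.rep, b.rep} : Set (Fin 3 → ℝ)) := by
  by_contra hc
  apply h
  have hli := myPairLI hab
  have h2 : LinearIndependent ℝ (Fin.snoc ![a.rep, b.rep] c.rep : Fin 3 → (Fin 3 → ℝ)) :=
    linearIndependent_fin_snoc.2 ⟨hli, by rwa [myRange]⟩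
  convert h2 using 1
  funext i; fin_cases i <;> rfl

lemma lineEq {u v : ℙ²} {N : Submodule ℝ (Fin 3 → ℝ)} (huv : u ≠ v)
    (hu : u.rep ∈ N) (hv : v.rep ∈ N) (hN : finrank ℝ N = 2) :
    span ℝ ({u.rep, v.rep} : Set (Fin 3 → ℝ)) = N := by
  have hle : span ℝ ({u.rep, v.rep} : Set (Fin 3 → ℝ)) ≤ N :=
    span_le.2 (by simp [Set.insert_subset_iff, hu, hv])
  exact Submodule.eq_of_le_of_finrank_le hle (by rw [hN, mySpanRank huv])

lemma existsLine : ∃ L : Submodule ℝ (Fin 3 → ℝ), finrank ℝ L = 2 := by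
  refine ⟨span ℝ (Set.range ((Pi.basisFun ℝ (Fin 3)) ∘ Fin.castLE (by norm_num : 2 ≤ 3))), ?_⟩
  rw [finrank_span_eq_card
    ((Pi.basisFun ℝ (Fin 3)).linearIndependent.comp _ (Fin.castLE_injective _))]
  simp

lemma key {x y p q : ℙ²} {L M : Submodule ℝ (Fin 3 → ℝ)}
    (hxL : x.rep ∈ L) (hyL : y.rep ∈ L) (hpM : p.rep ∈ M) (hqM : q.rep ∈ M)
    (hp : p.rep ∉ L) (hq : q.rep ∉ L)
    {a b c : ℙ²}
    (ha : a = x ∨ a = y ∨ a = p ∨ a = q)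
    (hb : b = x ∨ b = y ∨ b = p ∨ b = q)
    (hc : c = x ∨ c = y ∨ c = p ∨ c = q)
    (hab : a ≠ b) (hac : a ≠ c) (hbc : b ≠ c) (hcol : ProjCollinear a b c) :
    x.rep ∈ M ∨ y.rep ∈ M := by
  have step : ∀ (N : Submodule ℝ (Fin 3 → ℝ)) (u v w : ℙ²), u.rep ∈ N → v.rep ∈ N →
      w.rep ∈ span ℝ ({u.rep, v.rep} : Set (Fin 3 → ℝ)) → w.rep ∈ N := by
    intro N u v w hu hv hw
    exact span_le.2 (by simp [Set.insert_subset_iff, hu, hv]) hw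
  have m3 := colThird hab hcol
  have m1 := colThird hbc (colRot hcol)
  have m2 := colThird (Ne.symm hac) (colRot (colRot hcol))
  have m1' := m1; rw [Set.pair_comm] at m1'
  have m2' := m2; rw [Set.pair_comm] at m2'
  have m3' := m3; rw [Set.pair_comm] at m3'
  rcases ha with rfl|rfl|rfl|rfl <;> rcases hb with rfl|rfl|rfl|rfl <;>
    rcases hc with rfl|rfl|rfl|rfl <;>
  first
  | exact absurd rfl hab
  | exact absurd rfl hac
  | exact absurd rfl hbc
  | exact absurd (step _ _ _ _ hxL hyL m1) hp
  | exact absurd (step _ _ _ _ hxL hyL m2) hp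
  | exact absurd (step _ _ _ _ hxL hyL m3) hp
  | exact absurd (step _ _ _ _ hxL hyL m1') hp
  | exact absurd (step _ _ _ _ hxL hyL m2') hp
  | exact absurd (step _ _ _ _ hxL hyL m3') hp
  | exact absurd (step _ _ _ _ hxL hyL m1) hq
  | exact absurd (step _ _ _ _ hxL hyL m2) hq
  | exact absurd (step _ _ _ _ hxL hyL m3) hq
  | exact absurd (step _ _ _ _ hxL hyL m1') hq
  | exact absurd (step _ _ _ _ hxL hyL m2') hq
  | exact absurd (step _ _ _ _ hxL hyL m3') hq
  | exact Or.inl (step _ _ _ _ hpM hqM m1)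
  | exact Or.inl (step _ _ _ _ hpM hqM m2)
  | exact Or.inl (step _ _ _ _ hpM hqM m3)
  | exact Or.inl (step _ _ _ _ hpM hqM m1')
  | exact Or.inl (step _ _ _ _ hpM hqM m2')
  | exact Or.inl (step _ _ _ _ hpM hqM m3')
  | exact Or.inr (step _ _ _ _ hpM hqM m1)
  | exact Or.inr (step _ _ _ _ hpM hqM m2)
  | exact Or.inr (step _ _ _ _ hpM hqM m3)
  | exact Or.inr (step _ _ _ _ hpM hqM m1')
  | exact Or.inr (step _ _ _ _ hpM hqM m2')
  | exact Or.inr (step _ _ _ _ hpM hqM m3')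

/-- If every 4-element subset of a finite set `P` of `n` points of ℙ² contains three
collinear points, then some projective line (a 2-dimensional linear subspace of ℝ³)
contains at least `n - 1` of the points of `P`. -/
theorem statement0 (n : ℕ) (P : Finset (Projectivization ℝ (Fin 3 → ℝ)))
    (hcard : P.card = n)
    (h4 : ∀ Q ⊆ P, Q.card = 4 →
      ∃ a ∈ Q, ∃ b ∈ Q, ∃ c ∈ Q, a ≠ b ∧ a ≠ c ∧ b ≠ c ∧ ProjCollinear a b c) :
    ∃ L : Submodule ℝ (Fin 3 → ℝ), Module.finrank ℝ L = 2 ∧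
      n - 1 ≤ (P.filter (fun p : Projectivization ℝ (Fin 3 → ℝ) => p.rep ∈ L)).card := by
  subst hcard
  by_cases h1 : P.card ≤ 1
  · obtain ⟨L, hL⟩ := existsLine
    exact ⟨L, hL, by omega⟩
  push_neg at h1
  by_cases h3 : P.card ≤ 3
  · obtain ⟨u, hu, v, hv, huv⟩ := Finset.one_lt_card.1 h1
    refine ⟨span ℝ {u.rep, v.rep}, mySpanRank huv, ?_⟩
    have hsub : ({u, v} : Finset ℙ²) ⊆
        P.filter (fun p : ℙ² => p.rep ∈ span ℝ ({u.rep, v.rep} : Set (Fin 3 → ℝ))) := by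
      intro z hz
      simp only [Finset.mem_insert, Finset.mem_singleton] at hz
      rcases hz with rfl | rfl <;>
        · refine Finset.mem_filter.2 ⟨by assumption, subset_span (by simp)⟩
    have h2 := Finset.card_le_card hsub
    rw [Finset.card_insert_of_notMem (by simpa using huv), Finset.card_singleton] at h2
    omega
  push_neg at h3
  obtain ⟨Q, hQP, hQ4⟩ := Finset.exists_subset_card_eq (show 4 ≤ P.card by omega)
  obtain ⟨a, ha, b, hb, c, hc, hab, hac, hbc, hcol⟩ := h4 Q hQP hQ4
  have haP := hQP ha
  have hbP := hQP hb
  have hcP := hQP hc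
  set L : Submodule ℝ (Fin 3 → ℝ) := span ℝ {a.rep, b.rep} with hLdef
  have hrankL : finrank ℝ L = 2 := mySpanRank hab
  have haL : a.rep ∈ L := subset_span (by simp)
  have hbL : b.rep ∈ L := subset_span (by simp)
  have hcL : c.rep ∈ L := colThird hab hcol
  by_cases hoff : ∀ p ∈ P, ∀ q ∈ P, p.rep ∉ L → q.rep ∉ L → p = q
  · refine ⟨L, hrankL, ?_⟩
    have hsplit := Finset.card_filter_add_card_filter_not
      (s := P) (p := fun p : ℙ² => p.rep ∈ L)
    have hone : (P.filter (fun p : ℙ² => ¬ p.rep ∈ L)).card ≤ 1 := by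
      refine Finset.card_le_one.2 ?_
      intro u hu v hv
      rw [Finset.mem_filter] at hu hv
      exact hoff u hu.1 v hv.1 hu.2 hv.2
    omega
  · exfalso
    push_neg at hoff
    obtain ⟨p, hpP, q, hqP, hp, hq, hpq⟩ := hoff
    set M : Submodule ℝ (Fin 3 → ℝ) := span ℝ {p.rep, q.rep} with hMdef
    have hrankM : finrank ℝ M = 2 := mySpanRank hpq
    have hpM : p.rep ∈ M := subset_span (by simp)
    have hqM : q.rep ∈ M := subset_span (by simp)
    have quad : ∀ x y : ℙ², x ∈ P → y ∈ P → x ≠ y → x.rep ∈ L → y.rep ∈ L →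
        x.rep ∈ M ∨ y.rep ∈ M := by
      intro x y hxP hyP hxy hxL hyL
      have hxp : x ≠ p := fun h => hp (h ▸ hxL)
      have hxq : x ≠ q := fun h => hq (h ▸ hxL)
      have hyp' : y ≠ p := fun h => hp (h ▸ hyL)
      have hyq : y ≠ q := fun h => hq (h ▸ hyL)
      have hQsub : ({x, y, p, q} : Finset ℙ²) ⊆ P := by
        intro z hz
        simp only [Finset.mem_insert, Finset.mem_singleton] at hz
        rcases hz with rfl|rfl|rfl|rfl <;> assumption
      have hQcard : ({x, y, p, q} : Finset ℙ²).card = 4 := by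
        rw [Finset.card_insert_of_notMem (by simp [hxy, hxp, hxq]),
          Finset.card_insert_of_notMem (by simp [hyp', hyq]),
          Finset.card_insert_of_notMem (by simpa using hpq), Finset.card_singleton]
      obtain ⟨a', ha', b', hb', c', hc', hab', hac', hbc', hcol'⟩ := h4 _ hQsub hQcard
      simp only [Finset.mem_insert, Finset.mem_singleton] at ha' hb' hc'
      exact key hxL hyL hpM hqM hp hq ha' hb' hc' hab' hac' hbc' hcol'
    have k1 := quad a b haP hbP hab haL hbL
    have k2 := quad a c haP hcP hac haL hcL
    have k3 := quad b c hbP hcP hbc hbL hcL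
    have main : ∃ u v : ℙ², u ≠ v ∧ u.rep ∈ L ∧ v.rep ∈ L ∧ u.rep ∈ M ∧ v.rep ∈ M := by
      rcases k1 with h | h
      · rcases k3 with h' | h'
        · exact ⟨a, b, hab, haL, hbL, h, h'⟩
        · exact ⟨a, c, hac, haL, hcL, h, h'⟩
      · rcases k2 with h' | h'
        · exact ⟨a, b, hab, haL, hbL, h', h⟩
        · exact ⟨b, c, hbc, hbL, hcL, h, h'⟩
    obtain ⟨u, v, huv, huL, hvL, huM, hvM⟩ := main
    have e1 : span ℝ ({u.rep, v.rep} : Set (Fin 3 → ℝ)) = L := lineEq huv huL hvL hrankL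
    have e2 : span ℝ ({u.rep, v.rep} : Set (Fin 3 → ℝ)) = M := lineEq huv huM hvM hrankM
    have hLM : L = M := e1 ▸ e2
    rw [hLM] at hp
    exact hp hpM
end

section
/- Let n be a natural number and let P be a finite set of n points of the real projective plane ℙ². If there is no (n − 1)-element subset of P all of whose points lie on a common projective line, then there exist four points of P no three of which are collinear. -/
open Module Submodule

namespace Statement1Aux

abbrev V3 := Fin 3 → ℝ
abbrev PP := Projectivization ℝ V3

lemma li_swap {u v w : V3} (h : LinearIndependent ℝ ![u, v, w]) :
    LinearIndependent ℝ ![v, u, w] := by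
  have he : ![v, u, w] = ![u, v, w] ∘ (![1, 0, 2] : Fin 3 → Fin 3) := by
    funext i; fin_cases i <;> rfl
  rw [he]
  exact h.comp _ (by decide)

lemma li_rot {u v w : V3} (h : LinearIndependent ℝ ![u, v, w]) :
    LinearIndependent ℝ ![v, w, u] := by
  have he : ![v, w, u] = ![u, v, w] ∘ (![1, 2, 0] : Fin 3 → Fin 3) := by
    funext i; fin_cases i <;> rfl
  rw [he]
  exact h.comp _ (by decide)

lemma rep_smul_eq {p b : PP} {n : ℝ} (h : p.rep = n • b.rep) : p = b := by
  rw [← Projectivization.mk_rep p, ← Projectivization.mk_rep b,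
    Projectivization.mk_eq_mk_iff']
  exact ⟨n, h.symm⟩

lemma rep_inj {p b : PP} (h : p.rep = b.rep) : p = b :=
  rep_smul_eq (show p.rep = (1 : ℝ) • b.rep by rw [one_smul, h])

lemma pair_li {a b : PP} (h : a ≠ b) : LinearIndependent ℝ ![a.rep, b.rep] := by
  have h2 := (Projectivization.independent_pair_iff_ne a b).mpr h
  rw [Projectivization.independent_iff] at h2
  have he : ![a.rep, b.rep] = Projectivization.rep ∘ ![a, b] := by
    funext i; fin_cases i <;> rfl
  rw [he]; exact h2

lemma li3_ne {a b c : PP} (h : LinearIndependent ℝ ![a.rep, b.rep, c.rep]) :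
    a ≠ b ∧ a ≠ c ∧ b ≠ c := by
  have hi := h.injective
  refine ⟨fun e => ?_, fun e => ?_, fun e => ?_⟩
  · exact absurd (hi (show _ from by simp [e] : (![a.rep, b.rep, c.rep]) 0 = ![a.rep, b.rep, c.rep] 1)) (by decide)
  · exact absurd (hi (show _ from by simp [e] : (![a.rep, b.rep, c.rep]) 0 = ![a.rep, b.rep, c.rep] 2)) (by decide)
  · exact absurd (hi (show _ from by simp [e] : (![a.rep, b.rep, c.rep]) 1 = ![a.rep, b.rep, c.rep] 2)) (by decide)

lemma li_cons_iff {x a b : V3} :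
    LinearIndependent ℝ ![x, a, b] ↔ LinearIndependent ℝ ![a, b] ∧ x ∉ span ℝ {a, b} := by
  have h1 : (![x, a, b] : Fin 3 → V3) = Fin.cons x ![a, b] := rfl
  have h2 : Set.range (![a, b] : Fin 2 → V3) = {a, b} := by
    simp [Matrix.range_cons, Matrix.range_empty]
    exact Set.pair_comm _ _
  rw [h1, linearIndependent_fin_cons, h2]

lemma li_of_not_mem {p a b : PP} (hab : a ≠ b) (h : p.rep ∉ span ℝ {a.rep, b.rep}) :
    LinearIndependent ℝ ![p.rep, a.rep, b.rep] :=
  li_cons_iff.mpr ⟨pair_li hab, h⟩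

lemma inter_pt {x y z p : PP} (h : LinearIndependent ℝ ![x.rep, y.rep, z.rep])
    (h1 : p.rep ∈ span ℝ {x.rep, y.rep}) (h2 : p.rep ∈ span ℝ {y.rep, z.rep}) : p = y := by
  obtain ⟨m, n, hmn⟩ := Submodule.mem_span_pair.mp h1
  obtain ⟨s, t, hst⟩ := Submodule.mem_span_pair.mp h2
  have h0 := Fintype.linearIndependent_iff.mp h ![m, n - s, -t] ?_
  · have hm0 : m = 0 := h0 0
    have ht0 : -t = 0 := h0 2
    rw [hm0, zero_smul, zero_add] at hmn
    exact rep_smul_eq hmn.symm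
  · have key : m • x.rep + n • y.rep - (s • y.rep + t • z.rep) = 0 := by
      rw [hmn, hst, sub_self]
    have : m • x.rep + (n - s) • y.rep + (-t) • z.rep
        = m • x.rep + n • y.rep - (s • y.rep + t • z.rep) := by
      rw [sub_smul, neg_smul]; abel
    simp only [Fin.sum_univ_three]
    simp only [Matrix.cons_val_zero, Matrix.cons_val_one, Matrix.head_cons,
      Matrix.cons_val_two, Matrix.tail_cons]
    rw [this, key]

lemma span_pair_le' {x y : V3} {L : Submodule ℝ V3} (hx : x ∈ L) (hy : y ∈ L) :
    span ℝ {x, y} ≤ L := by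
  rw [span_le, Set.insert_subset_iff, Set.singleton_subset_iff]
  exact ⟨hx, hy⟩

lemma rank_span_pair {a b : PP} (h : a ≠ b) :
    finrank ℝ (span ℝ {a.rep, b.rep}) = 2 := by
  have hli := pair_li h
  have hr := finrank_span_eq_card hli
  have h2 : Set.range (![a.rep, b.rep] : Fin 2 → V3) = {a.rep, b.rep} := by
    simp [Matrix.range_cons, Matrix.range_empty]
    exact Set.pair_comm _ _
  rw [h2] at hr
  simpa using hr

lemma ext_step (M : Submodule ℝ V3) (h : finrank ℝ M < 3) :
    ∃ L, M ≤ L ∧ finrank ℝ L = finrank ℝ M + 1 := by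
  obtain ⟨v, hv⟩ := M.exists_of_finrank_lt (by rwa [Module.finrank_fin_fun])
  have hv0 : v ≠ 0 := by
    intro e
    exact hv 1 one_ne_zero (by rw [e, smul_zero]; exact M.zero_mem)
  refine ⟨M ⊔ span ℝ {v}, le_sup_left, ?_⟩
  have hinf : M ⊓ span ℝ {v} = ⊥ := by
    rw [eq_bot_iff]
    intro z hz
    rw [Submodule.mem_inf] at hz
    obtain ⟨r, rfl⟩ := Submodule.mem_span_singleton.mp hz.2
    rcases eq_or_ne r 0 with rfl | hr
    · simp
    · exact absurd hz.1 (hv r hr)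
  have hs := Submodule.finrank_sup_add_finrank_inf_eq M (span ℝ {v})
  rw [hinf, finrank_bot, finrank_span_singleton hv0] at hs
  omega

lemma ext2 (M : Submodule ℝ V3) (h : finrank ℝ M ≤ 2) :
    ∃ L, M ≤ L ∧ finrank ℝ L = 2 := by
  rcases eq_or_lt_of_le h with he | hl
  · exact ⟨M, le_rfl, he⟩
  · obtain ⟨L1, hML, hL1⟩ := ext_step M (by omega)
    rcases eq_or_lt_of_le (show finrank ℝ L1 ≤ 2 by omega) with he1 | hl1
    · exact ⟨L1, hML, he1⟩
    · obtain ⟨L2, hL12, hL2⟩ := ext_step L1 (by omega)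
      exact ⟨L2, hML.trans hL12, by omega⟩

lemma exists_triple (s : Finset PP)
    (h : ¬ ∃ L : Submodule ℝ V3, finrank ℝ L = 2 ∧ ∀ p ∈ s, p.rep ∈ L) :
    ∃ a ∈ s, ∃ b ∈ s, ∃ c ∈ s, LinearIndependent ℝ ![a.rep, b.rep, c.rep] := by
  classical
  set T : Set V3 := Projectivization.rep '' (s : Set PP) with hT
  by_cases hr : finrank ℝ (span ℝ T) ≤ 2
  · obtain ⟨L, hle, hL⟩ := ext2 _ hr
    exact absurd ⟨L, hL, fun p hp => hle (subset_span ⟨p, hp, rfl⟩)⟩ h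
  · push_neg at hr
    have hle3 : finrank ℝ (span ℝ T) ≤ 3 := by
      have := (span ℝ T).finrank_le
      rwa [Module.finrank_fin_fun] at this
    have hr3 : finrank ℝ (span ℝ T) = 3 := le_antisymm hle3 hr
    obtain ⟨B, hBT, hBspan, hBli⟩ := exists_linearIndependent ℝ T
    have hBfin : B.Finite := hBli.set_finite_of_isNoetherian
    haveI : Fintype B := hBfin.fintype
    have hcard3 : B.toFinset.card = 3 := by
      rw [← finrank_span_set_eq_card hBli, hBspan, hr3]
    obtain ⟨x, y, z, hxy, hxz, hyz, hxyz⟩ := Finset.card_eq_three.mp hcard3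
    have hxB : x ∈ B := by
      have : x ∈ B.toFinset := by rw [hxyz]; simp
      simpa using this
    have hyB : y ∈ B := by
      have : y ∈ B.toFinset := by rw [hxyz]; simp
      simpa using this
    have hzB : z ∈ B := by
      have : z ∈ B.toFinset := by rw [hxyz]; simp
      simpa using this
    have hinj : Function.Injective (![x, y, z] : Fin 3 → V3) := by
      intro i j hij
      fin_cases i <;> fin_cases j <;> simp_all
    have hli : LinearIndependent ℝ ![x, y, z] := by
      let f : Fin 3 → B := fun i =>
        ⟨(![x, y, z] : Fin 3 → V3) i, by fin_cases i <;> assumption⟩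
      have hfe : ((↑) : B → V3) ∘ f = ![x, y, z] := by funext i; rfl
      have hfi : Function.Injective f := fun i j hij =>
        hinj (congrArg Subtype.val hij)
      have := hBli.comp f hfi
      rwa [hfe] at this
    obtain ⟨a, haS, rfl⟩ := hBT hxB
    obtain ⟨b, hbS, rfl⟩ := hBT hyB
    obtain ⟨c, hcS, rfl⟩ := hBT hzB
    exact ⟨a, haS, b, hbS, c, hcS, hli⟩

lemma perms {u v w : V3} (h : LinearIndependent ℝ ![u, v, w]) :
    LinearIndependent ℝ ![u, v, w] ∧ LinearIndependent ℝ ![u, w, v] ∧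
    LinearIndependent ℝ ![v, u, w] ∧ LinearIndependent ℝ ![v, w, u] ∧
    LinearIndependent ℝ ![w, u, v] ∧ LinearIndependent ℝ ![w, v, u] :=
  ⟨h, li_rot (li_swap h), li_swap h, li_rot h, li_rot (li_rot h), li_swap (li_rot h)⟩

lemma build (P : Finset PP) (p1 p2 p3 p4 : PP)
    (m1 : p1 ∈ P) (m2 : p2 ∈ P) (m3 : p3 ∈ P) (m4 : p4 ∈ P)
    (t123 : LinearIndependent ℝ ![p1.rep, p2.rep, p3.rep])
    (t124 : LinearIndependent ℝ ![p1.rep, p2.rep, p4.rep])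
    (t134 : LinearIndependent ℝ ![p1.rep, p3.rep, p4.rep])
    (t234 : LinearIndependent ℝ ![p2.rep, p3.rep, p4.rep]) :
    ∃ Q ⊆ P, Q.card = 4 ∧
      ∀ a ∈ Q, ∀ b ∈ Q, ∀ c ∈ Q, a ≠ b → a ≠ c → b ≠ c →
        ¬ (¬ LinearIndependent ℝ ![a.rep, b.rep, c.rep]) := by
  classical
  obtain ⟨n12, n13, n23⟩ := li3_ne t123
  obtain ⟨-, n14, n24⟩ := li3_ne t124
  obtain ⟨-, -, n34⟩ := li3_ne t134
  obtain ⟨a1, a2, a3, a4, a5, a6⟩ := perms t123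
  obtain ⟨b1, b2, b3, b4, b5, b6⟩ := perms t124
  obtain ⟨c1, c2, c3, c4, c5, c6⟩ := perms t134
  obtain ⟨d1, d2, d3, d4, d5, d6⟩ := perms t234
  refine ⟨{p1, p2, p3, p4}, ?_, ?_, ?_⟩
  · intro x hx
    simp only [Finset.mem_insert, Finset.mem_singleton] at hx
    rcases hx with rfl | rfl | rfl | rfl <;> assumption
  · rw [Finset.card_insert_of_notMem (by simp [n12, n13, n14]),
      Finset.card_insert_of_notMem (by simp [n23, n24]),
      Finset.card_insert_of_notMem (by simp [n34]), Finset.card_singleton]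
  · intro a ha b hb c hc hab hac hbc
    simp only [Finset.mem_insert, Finset.mem_singleton] at ha hb hc
    rw [not_not]
    rcases ha with rfl | rfl | rfl | rfl <;> rcases hb with rfl | rfl | rfl | rfl <;>
      rcases hc with rfl | rfl | rfl | rfl <;>
      first
        | exact absurd rfl hab
        | exact absurd rfl hac
        | exact absurd rfl hbc
        | assumption

lemma quad {a b c d e : PP} (habc : LinearIndependent ℝ ![a.rep, b.rep, c.rep])
    (hdm : d.rep ∈ span ℝ {a.rep, b.rep}) (hda : d ≠ a) (hdb : d ≠ b)
    (hem : e.rep ∈ span ℝ {b.rep, c.rep}) (heb : e ≠ b) (hec : e ≠ c) :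
    LinearIndependent ℝ ![a.rep, c.rep, d.rep] ∧
    LinearIndependent ℝ ![a.rep, c.rep, e.rep] ∧
    LinearIndependent ℝ ![a.rep, d.rep, e.rep] ∧
    LinearIndependent ℝ ![c.rep, d.rep, e.rep] := by
  obtain ⟨nab, nac, nbc⟩ := li3_ne habc
  have hbac : LinearIndependent ℝ ![b.rep, a.rep, c.rep] := li_swap habc
  have hbca : LinearIndependent ℝ ![b.rep, c.rep, a.rep] := li_rot habc
  have hd3 : d.rep ∉ span ℝ {a.rep, c.rep} := fun hm =>
    hda (inter_pt hbac (by rwa [Set.pair_comm]) hm)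
  have he3 : e.rep ∉ span ℝ {a.rep, c.rep} := fun hm =>
    hec (inter_pt hbca hem (by rwa [Set.pair_comm]))
  have hde : e.rep ∉ span ℝ {a.rep, d.rep} := by
    intro hm
    have h1 : e.rep ∈ span ℝ {a.rep, b.rep} :=
      span_pair_le' (subset_span (by simp)) hdm hm
    exact heb (inter_pt habc h1 hem)
  have hed : d.rep ∉ span ℝ {c.rep, e.rep} := by
    intro hm
    have h1 : d.rep ∈ span ℝ {b.rep, c.rep} :=
      span_pair_le' (subset_span (by simp)) hem hm
    exact hdb (inter_pt habc hdm h1)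
  refine ⟨li_rot (li_of_not_mem nac hd3), li_rot (li_of_not_mem nac he3),
    li_rot (li_of_not_mem hda.symm hde), li_swap (li_of_not_mem hec.symm hed)⟩

end Statement1Aux

open Statement1Aux Module Submodule in
/-- If no `n - 1` points of a finite set `P` of `n` points of ℙ² lie on a common
projective line (a 2-dimensional linear subspace of ℝ³), then there exist four points
of `P` no three of which are collinear (a K₄-quadrangulation). -/
theorem statement1 (n : ℕ) (P : Finset (Projectivization ℝ (Fin 3 → ℝ)))
    (hcard : P.card = n)
    (hnoline : ¬ ∃ Q ⊆ P, Q.card = n - 1 ∧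
      ∃ L : Submodule ℝ (Fin 3 → ℝ), Module.finrank ℝ L = 2 ∧ ∀ p ∈ Q, p.rep ∈ L) :
    ∃ Q ⊆ P, Q.card = 4 ∧
      ∀ a ∈ Q, ∀ b ∈ Q, ∀ c ∈ Q, a ≠ b → a ≠ c → b ≠ c → ¬ ProjCollinear a b c := by
  classical
  obtain ⟨Q0, hQ0P, hQ0card⟩ :=
    Finset.exists_subset_card_eq (s := P) (n := n - 1) (by rw [hcard]; exact Nat.sub_le n 1)
  have hQ0 : ¬ ∃ L : Submodule ℝ (Fin 3 → ℝ),
      finrank ℝ L = 2 ∧ ∀ p ∈ Q0, p.rep ∈ L := by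
    rintro ⟨L, h2, hm⟩
    exact hnoline ⟨Q0, hQ0P, hQ0card, L, h2, hm⟩
  obtain ⟨a, haQ, b, hbQ, c, hcQ, habc⟩ := exists_triple Q0 hQ0
  have haP : a ∈ P := hQ0P haQ
  have hbP : b ∈ P := hQ0P hbQ
  have hcP : c ∈ P := hQ0P hcQ
  obtain ⟨nab, nac, nbc⟩ := li3_ne habc
  show ∃ Q ⊆ P, Q.card = 4 ∧ ∀ a ∈ Q, ∀ b ∈ Q, ∀ c ∈ Q, a ≠ b → a ≠ c → b ≠ c →
    ¬ (¬ LinearIndependent ℝ ![a.rep, b.rep, c.rep])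
  by_cases hp : ∀ p ∈ P, p.rep ∈ span ℝ {a.rep, b.rep} ∨
      p.rep ∈ span ℝ {b.rep, c.rep} ∨ p.rep ∈ span ℝ {a.rep, c.rep}
  · by_cases hd : ∃ d ∈ P, d.rep ∈ span ℝ {a.rep, b.rep} ∧ d ≠ a ∧ d ≠ b
    · obtain ⟨d, hdP, hdm, hda, hdb⟩ := hd
      by_cases he : ∃ e ∈ P, e.rep ∈ span ℝ {b.rep, c.rep} ∧ e ≠ b ∧ e ≠ c
      · obtain ⟨e, heP, hem, heb, hec⟩ := he
        obtain ⟨t1, t2, t3, t4⟩ := quad habc hdm hda hdb hem heb hec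
        exact build P a c d e haP hcP hdP heP t1 t2 t3 t4
      · by_cases hf : ∃ f ∈ P, f.rep ∈ span ℝ {a.rep, c.rep} ∧ f ≠ a ∧ f ≠ c
        · obtain ⟨f, hfP, hfm, hfa, hfc⟩ := hf
          obtain ⟨t1, t2, t3, t4⟩ :=
            quad (li_swap habc) (by rwa [Set.pair_comm]) hdb hda hfm hfa hfc
          exact build P b c d f hbP hcP hdP hfP t1 t2 t3 t4
        · exfalso
          push_neg at he hf
          apply hnoline
          refine ⟨P.erase c, Finset.erase_subset _ _,
            by rw [Finset.card_erase_of_mem hcP, hcard],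
            span ℝ {a.rep, b.rep}, rank_span_pair nab, ?_⟩
          intro p hpe
          obtain ⟨hpc, hpP⟩ := Finset.mem_erase.mp hpe
          rcases hp p hpP with h1 | h2 | h3
          · exact h1
          · rcases eq_or_ne p b with rfl | hpb
            · exact subset_span (by simp)
            · exact absurd (he p hpP h2 hpb) hpc
          · rcases eq_or_ne p a with rfl | hpa
            · exact subset_span (by simp)
            · exact absurd (hf p hpP h3 hpa) hpc
    · by_cases he : ∃ e ∈ P, e.rep ∈ span ℝ {b.rep, c.rep} ∧ e ≠ b ∧ e ≠ c
      · obtain ⟨e, heP, hem, heb, hec⟩ := he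
        by_cases hf : ∃ f ∈ P, f.rep ∈ span ℝ {a.rep, c.rep} ∧ f ≠ a ∧ f ≠ c
        · obtain ⟨f, hfP, hfm, hfa, hfc⟩ := hf
          obtain ⟨t1, t2, t3, t4⟩ :=
            quad (li_rot habc) hem heb hec (by rwa [Set.pair_comm]) hfc hfa
          exact build P b a e f hbP haP heP hfP t1 t2 t3 t4
        · exfalso
          push_neg at hd hf
          apply hnoline
          refine ⟨P.erase a, Finset.erase_subset _ _,
            by rw [Finset.card_erase_of_mem haP, hcard],
            span ℝ {b.rep, c.rep}, rank_span_pair nbc, ?_⟩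
          intro p hpe
          obtain ⟨hpa, hpP⟩ := Finset.mem_erase.mp hpe
          rcases hp p hpP with h1 | h2 | h3
          · have := hd p hpP h1 hpa
            subst this
            exact subset_span (by simp)
          · exact h2
          · have := hf p hpP h3 hpa
            subst this
            exact subset_span (by simp)
      · exfalso
        push_neg at hd he
        apply hnoline
        refine ⟨P.erase b, Finset.erase_subset _ _,
          by rw [Finset.card_erase_of_mem hbP, hcard],
          span ℝ {a.rep, c.rep}, rank_span_pair nac, ?_⟩
        intro p hpe
        obtain ⟨hpb, hpP⟩ := Finset.mem_erase.mp hpe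
        rcases hp p hpP with h1 | h2 | h3
        · rcases eq_or_ne p a with rfl | hpa
          · exact subset_span (by simp)
          · exact absurd (hd p hpP h1 hpa) hpb
        · rcases eq_or_ne p b with rfl | hpb'
          · exact absurd rfl hpb
          · have := he p hpP h2 hpb'
            subst this
            exact subset_span (by simp)
        · exact h3
  · push_neg at hp
    obtain ⟨p, hpP, hp1, hp2, hp3⟩ := hp
    exact build P a b c p haP hbP hcP hpP habc
      (li_rot (li_of_not_mem nab hp1))
      (li_rot (li_of_not_mem nac hp3))
      (li_rot (li_of_not_mem nbc hp2))
end

section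
/- Let V be a finite set of nonzero vectors in ℝ³ that are pairwise linearly independent (so they represent distinct points of the projective plane), and let n be the cardinality of V. Suppose that every 4-element subset of V contains three vectors whose linear span has dimension at most 2. Then there exists a 2-dimensional linear subspace of ℝ³ containing all but at most one of the vectors of V. -/
open scoped Classical

lemma finrank_span_pair' {u v : Fin 3 → ℝ} (h : LinearIndependent ℝ ![u,v]) :
    Module.finrank ℝ (Submodule.span ℝ ({u,v} : Set (Fin 3 → ℝ))) = 2 := by
  have := finrank_span_eq_card h
  simp at this
  rwa [show Set.range ![u,v] = {u,v} by
    ext t; simp [Matrix.range_cons, Matrix.range_empty]; tauto] at this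

lemma li_e01 : LinearIndependent ℝ ![(fun i => if i = 0 then (1:ℝ) else 0 : Fin 3 → ℝ),
    (fun i => if i = 1 then (1:ℝ) else 0)] := by
  rw [LinearIndependent.pair_iff]
  intro s t hst
  constructor
  · have := congrFun hst 0; simpa using this
  · have := congrFun hst 1; simpa using this

set_option maxHeartbeats 4000000 in
/-- Let `V` be a finite set of nonzero, pairwise linearly independent vectors of ℝ³,
with `n = V.card`. If every 4-element subset of `V` contains three vectors whose span
has dimension at most 2, then some 2-dimensional linear subspace of ℝ³ contains all
but at most one of the vectors of `V`. -/
theorem statement2 (V : Finset (Fin 3 → ℝ)) (n : ℕ) (hn : V.card = n)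
    (hne : ∀ v ∈ V, v ≠ 0)
    (hpair : ∀ v ∈ V, ∀ w ∈ V, v ≠ w → LinearIndependent ℝ ![v, w])
    (h4 : ∀ S ⊆ V, S.card = 4 →
      ∃ a ∈ S, ∃ b ∈ S, ∃ c ∈ S, a ≠ b ∧ a ≠ c ∧ b ≠ c ∧
        Module.finrank ℝ (Submodule.span ℝ {a, b, c}) ≤ 2) :
    ∃ L : Submodule ℝ (Fin 3 → ℝ), Module.finrank ℝ L = 2 ∧
      (V.filter (fun v => v ∉ L)).card ≤ 1 := by
  -- helper: from a collinear triple, third point lies in span of first two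
  have solve : ∀ u v w : Fin 3 → ℝ, u ∈ V → v ∈ V → w ∈ V → u ≠ v →
      ∀ T : Set (Fin 3 → ℝ), Module.finrank ℝ (Submodule.span ℝ T) ≤ 2 → T = {u,v,w} →
      w ∈ Submodule.span ℝ ({u,v} : Set (Fin 3 → ℝ)) := by
    intro u v w hu hv hw huv T hT hTeq
    subst hTeq
    have h2 : Module.finrank ℝ (Submodule.span ℝ ({u,v} : Set (Fin 3 → ℝ))) = 2 :=
      finrank_span_pair' (hpair u hu v hv huv)
    have hle : Submodule.span ℝ ({u,v} : Set (Fin 3 → ℝ)) ≤ Submodule.span ℝ {u,v,w} :=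
      Submodule.span_mono (by intro t ht; simp at ht ⊢; tauto)
    have heq := Submodule.eq_of_le_of_finrank_le hle (by rw [h2]; exact hT)
    rw [heq]
    exact Submodule.subset_span (by simp)
  rcases le_or_gt V.card 1 with hc1 | hc1
  · -- small case: take a fixed plane
    refine ⟨Submodule.span ℝ {(fun i => if i = 0 then (1:ℝ) else 0 : Fin 3 → ℝ),
      (fun i => if i = 1 then (1:ℝ) else 0)}, finrank_span_pair' li_e01, ?_⟩
    exact le_trans (Finset.card_filter_le _ _) hc1
  rcases le_or_gt V.card 3 with hc3 | hc3
  · -- 2 or 3 points: plane through two of them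
    obtain ⟨a, ha, b, hb, hab⟩ := Finset.one_lt_card.mp hc1
    refine ⟨Submodule.span ℝ {a, b}, finrank_span_pair' (hpair a ha b hb hab), ?_⟩
    have hsub : V.filter (fun v => v ∉ Submodule.span ℝ ({a,b} : Set (Fin 3 → ℝ)))
        ⊆ (V.erase a).erase b := by
      intro t ht
      simp only [Finset.mem_filter] at ht
      refine Finset.mem_erase.mpr ⟨?_, Finset.mem_erase.mpr ⟨?_, ht.1⟩⟩
      · rintro rfl; exact ht.2 (Submodule.subset_span (by simp))
      · rintro rfl; exact ht.2 (Submodule.subset_span (by simp))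
      
    calc (V.filter _).card ≤ ((V.erase a).erase b).card := Finset.card_le_card hsub
      _ ≤ V.card - 2 := by
          rw [Finset.card_erase_of_mem (Finset.mem_erase.mpr ⟨fun h => hab h.symm, hb⟩),
            Finset.card_erase_of_mem ha]
          omega
      _ ≤ 1 := by omega
  · -- main case: at least 4 points
    obtain ⟨S₀, hS₀V, hS₀card⟩ := Finset.exists_subset_card_eq (s := V) (n := 4) (by omega)
    obtain ⟨a, ha, b, hb, c, hc, hab, hac, hbc, hcol⟩ := h4 S₀ hS₀V hS₀card
    have haV := hS₀V ha; have hbV := hS₀V hb; have hcV := hS₀V hc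
    set L := Submodule.span ℝ ({a, b} : Set (Fin 3 → ℝ)) with hLdef
    have hL2 : Module.finrank ℝ L = 2 := finrank_span_pair' (hpair a haV b hbV hab)
    have haL : a ∈ L := Submodule.subset_span (by simp)
    have hbL : b ∈ L := Submodule.subset_span (by simp)
    have hcL : c ∈ L := solve a b c haV hbV hcV hab _ hcol rfl
    refine ⟨L, hL2, ?_⟩
    by_contra hcard
    push_neg at hcard
    obtain ⟨p, hp, q, hq, hpq⟩ := Finset.one_lt_card.mp hcard
    simp only [Finset.mem_filter] at hp hq
    obtain ⟨hpV, hpL⟩ := hp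
    obtain ⟨hqV, hqL⟩ := hq
    -- key step
    have key : ∀ u v w : Fin 3 → ℝ, u ∈ V → v ∈ V → w ∈ V → u ≠ v → u ≠ w → v ≠ w →
        Module.finrank ℝ (Submodule.span ℝ ({u,v,w} : Set (Fin 3 → ℝ))) ≤ 2 →
        (w ∈ Submodule.span ℝ ({u,v} : Set (Fin 3 → ℝ)) ∧
         w ∈ Submodule.span ℝ ({v,u} : Set (Fin 3 → ℝ)) ∧
         u ∈ Submodule.span ℝ ({v,w} : Set (Fin 3 → ℝ)) ∧
         u ∈ Submodule.span ℝ ({w,v} : Set (Fin 3 → ℝ)) ∧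
         v ∈ Submodule.span ℝ ({u,w} : Set (Fin 3 → ℝ)) ∧
         v ∈ Submodule.span ℝ ({w,u} : Set (Fin 3 → ℝ))) := by
      intro u v w hu hv hw huv huw hvw hcol'
      exact ⟨solve u v w hu hv hw huv _ hcol' rfl,
        solve v u w hv hu hw (Ne.symm huv) _ hcol' (by ext t; simp; tauto),
        solve v w u hv hw hu hvw _ hcol' (by ext t; simp; tauto),
        solve w v u hw hv hu (Ne.symm hvw) _ hcol' (by ext t; simp; tauto),
        solve u w v hu hw hv huw _ hcol' (by ext t; simp; tauto),
        solve w u v hw hu hv (Ne.symm huw) _ hcol' (by ext t; simp; tauto)⟩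
    have step : ∀ x y : Fin 3 → ℝ, x ∈ V → y ∈ V → x ∈ L → y ∈ L → x ≠ y →
        x ∈ Submodule.span ℝ ({p,q} : Set (Fin 3 → ℝ)) ∨
        y ∈ Submodule.span ℝ ({p,q} : Set (Fin 3 → ℝ)) := by
      intro x y hxV hyV hxL hyL hxy
      have hxp : x ≠ p := fun h => hpL (h ▸ hxL)
      have hxq : x ≠ q := fun h => hqL (h ▸ hxL)
      have hyp' : y ≠ p := fun h => hpL (h ▸ hyL)
      have hyq : y ≠ q := fun h => hqL (h ▸ hyL)
      have hsubL : Submodule.span ℝ ({x,y} : Set (Fin 3 → ℝ)) ≤ L :=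
        Submodule.span_le.mpr (Set.insert_subset_iff.mpr ⟨hxL, Set.singleton_subset_iff.mpr hyL⟩)
      have hsubL' : Submodule.span ℝ ({y,x} : Set (Fin 3 → ℝ)) ≤ L :=
        Submodule.span_le.mpr (Set.insert_subset_iff.mpr ⟨hyL, Set.singleton_subset_iff.mpr hxL⟩)
      have hScard : ({x, y, p, q} : Finset (Fin 3 → ℝ)).card = 4 := by
        rw [Finset.card_insert_of_notMem (by simp [hxy, hxp, hxq]),
          Finset.card_insert_of_notMem (by simp [hyp', hyq]),
          Finset.card_insert_of_notMem (by simp [hpq]), Finset.card_singleton]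
      have hSsub : ({x, y, p, q} : Finset (Fin 3 → ℝ)) ⊆ V := by
        intro t ht; simp at ht; rcases ht with rfl|rfl|rfl|rfl <;> assumption
      obtain ⟨a', ha', b', hb', c', hc', h1, h2, h3, hcol'⟩ := h4 _ hSsub hScard
      simp only [Finset.mem_insert, Finset.mem_singleton] at ha' hb' hc'
      rcases ha' with h|h|h|h <;> subst a' <;> rcases hb' with h|h|h|h <;> subst b' <;>
          rcases hc' with h|h|h|h <;> subst c' <;>
        first
        | exact absurd rfl h1
        | exact absurd rfl h2
        | exact absurd rfl h3
        | (have K := key _ _ _ (by assumption) (by assumption) (by assumption) h1 h2 h3 hcol'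
           first
           | exact Or.inl K.1 | exact Or.inl K.2.1 | exact Or.inl K.2.2.1
           | exact Or.inl K.2.2.2.1 | exact Or.inl K.2.2.2.2.1 | exact Or.inl K.2.2.2.2.2
           | exact Or.inr K.1 | exact Or.inr K.2.1 | exact Or.inr K.2.2.1
           | exact Or.inr K.2.2.2.1 | exact Or.inr K.2.2.2.2.1 | exact Or.inr K.2.2.2.2.2
           | exact absurd (hsubL K.1) hpL | exact absurd (hsubL K.2.1) hpL
           | exact absurd (hsubL K.2.2.1) hpL | exact absurd (hsubL K.2.2.2.1) hpL
           | exact absurd (hsubL K.2.2.2.2.1) hpL | exact absurd (hsubL K.2.2.2.2.2) hpL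
           | exact absurd (hsubL' K.1) hpL | exact absurd (hsubL' K.2.1) hpL
           | exact absurd (hsubL' K.2.2.1) hpL | exact absurd (hsubL' K.2.2.2.1) hpL
           | exact absurd (hsubL' K.2.2.2.2.1) hpL | exact absurd (hsubL' K.2.2.2.2.2) hpL
           | exact absurd (hsubL K.1) hqL | exact absurd (hsubL K.2.1) hqL
           | exact absurd (hsubL K.2.2.1) hqL | exact absurd (hsubL K.2.2.2.1) hqL
           | exact absurd (hsubL K.2.2.2.2.1) hqL | exact absurd (hsubL K.2.2.2.2.2) hqL
           | exact absurd (hsubL' K.1) hqL | exact absurd (hsubL' K.2.1) hqL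
           | exact absurd (hsubL' K.2.2.1) hqL | exact absurd (hsubL' K.2.2.2.1) hqL
           | exact absurd (hsubL' K.2.2.2.2.1) hqL | exact absurd (hsubL' K.2.2.2.2.2) hqL)
    set M := Submodule.span ℝ ({p,q} : Set (Fin 3 → ℝ)) with hMdef
    have hM2 : Module.finrank ℝ M = 2 := finrank_span_pair' (hpair p hpV q hqV hpq)
    -- two of a,b,c lie in M
    have hfin : ∃ x y : Fin 3 → ℝ, x ∈ V ∧ y ∈ V ∧ x ∈ L ∧ y ∈ L ∧ x ≠ y ∧ x ∈ M ∧ y ∈ M := by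
      have h₁ := step a b haV hbV haL hbL hab
      have h₂ := step a c haV hcV haL hcL hac
      have h₃ := step b c hbV hcV hbL hcL hbc
      rcases h₁ with hA | hB
      · rcases h₃ with hB | hC
        · exact ⟨a, b, haV, hbV, haL, hbL, hab, hA, hB⟩
        · rcases h₂ with hA' | hC'
          · exact ⟨a, c, haV, hcV, haL, hcL, hac, hA, hC⟩
          · exact ⟨a, c, haV, hcV, haL, hcL, hac, hA, hC'⟩
      · rcases h₂ with hA | hC
        · exact ⟨a, b, haV, hbV, haL, hbL, hab, hA, hB⟩
        · exact ⟨b, c, hbV, hcV, hbL, hcL, hbc, hB, hC⟩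
    obtain ⟨x, y, hxV, hyV, hxL, hyL, hxy, hxM, hyM⟩ := hfin
    have hxy2 : Module.finrank ℝ (Submodule.span ℝ ({x,y} : Set (Fin 3 → ℝ))) = 2 :=
      finrank_span_pair' (hpair x hxV y hyV hxy)
    have heqM : Submodule.span ℝ ({x,y} : Set (Fin 3 → ℝ)) = M :=
      Submodule.eq_of_le_of_finrank_le
        (Submodule.span_le.mpr (Set.insert_subset_iff.mpr ⟨hxM, Set.singleton_subset_iff.mpr hyM⟩))
        (by rw [hxy2, hM2])
    have heqL : Submodule.span ℝ ({x,y} : Set (Fin 3 → ℝ)) = L :=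
      Submodule.eq_of_le_of_finrank_le
        (Submodule.span_le.mpr (Set.insert_subset_iff.mpr ⟨hxL, Set.singleton_subset_iff.mpr hyL⟩))
        (by rw [hxy2, hL2])
    have : p ∈ L := by
      rw [← heqL, heqM]
      exact Submodule.subset_span (by simp)
    exact hpL this
end
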